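/- Let A ∈ ℝ^{n×n}, ε > 0, and let Z₀ ∈ ℝ^{n×r} have full column rank r. Define Z(t) := exp((t/ε)·A)·Z₀. Then for every t ∈ ℝ the matrix Z(t)ᵀZ(t) is invertible, and the orthogonal-projection-valued function P(t) := Z(t)·(Z(t)ᵀZ(t))⁻¹·Z(t)ᵀ is differentiable and satisfies the Riccati differential equation ε·(d/dt)P(t) = A·P(t) + P(t)·Aᵀ − P(t)·(A+Aᵀ)·P(t) for all t. -/

import Mathlib

/-!
`exp` is invertible, so `Z(t)` keeps full column rank and its Gram matrix `G = ZᵀZ` is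
invertible. With `B = ε⁻¹A` we have `Z' = BZ`, hence `G' = (BZ)ᵀZ + Zᵀ(BZ)` and
`(G⁻¹)' = -G⁻¹G'G⁻¹`. Expanding the product rule for `P = ZG⁻¹Zᵀ`, every term regroups as a
product of `B`, `Bᵀ` and `P` itself, which gives `P' = BP + PBᵀ - P(B + Bᵀ)P`.
-/

open Matrix NormedSpace Filter Topology

section MatrixDeriv

variable {l m n : Type*}

/-- Entrywise derivative, which needs no choice of norm on rectangular matrices. -/
def HasMatrixDerivAt (f : ℝ → Matrix m n ℝ) (f' : Matrix m n ℝ) (t : ℝ) : Prop :=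
  ∀ i j, HasDerivAt (fun s => f s i j) (f' i j) t

theorem hasMatrixDerivAt_const (c : Matrix m n ℝ) (t : ℝ) : HasMatrixDerivAt (fun _ => c) 0 t :=
  fun i j => hasDerivAt_const t (c i j)

namespace HasMatrixDerivAt

variable {f g : ℝ → Matrix m n ℝ} {f' g' : Matrix m n ℝ} {t : ℝ}

theorem unique (hf : HasMatrixDerivAt f f' t) (hg : HasMatrixDerivAt f g' t) : f' = g' :=
  Matrix.ext fun i j => (hf i j).unique (hg i j)

theorem congr_of_eventuallyEq (hf : HasMatrixDerivAt f f' t) (h : g =ᶠ[𝓝 t] f) :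
    HasMatrixDerivAt g f' t :=
  fun i j => (hf i j).congr_of_eventuallyEq (h.mono fun _ hs => congrFun (congrFun hs i) j)

theorem transpose (hf : HasMatrixDerivAt f f' t) : HasMatrixDerivAt (fun s => (f s)ᵀ) f'ᵀ t :=
  fun i j => hf j i

theorem mul [Fintype n] {g : ℝ → Matrix n l ℝ} {g' : Matrix n l ℝ} (hf : HasMatrixDerivAt f f' t)
    (hg : HasMatrixDerivAt g g' t) :
    HasMatrixDerivAt (fun s => f s * g s) (f' * g t + f t * g') t := by
  intro i j
  simp only [mul_apply, Matrix.add_apply, ← Finset.sum_add_distrib]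
  exact HasDerivAt.fun_sum fun k _ => (hf i k).mul (hg k j)

theorem mul_const [Fintype n] (hf : HasMatrixDerivAt f f' t) (B : Matrix n l ℝ) :
    HasMatrixDerivAt (fun s => f s * B) (f' * B) t := by
  simpa using hf.mul (hasMatrixDerivAt_const B t)

end HasMatrixDerivAt

theorem differentiableAt_det [Fintype n] [DecidableEq n] {M : ℝ → Matrix n n ℝ} {t : ℝ}
    (hM : ∀ i j, DifferentiableAt ℝ (fun s => M s i j) t) :
    DifferentiableAt ℝ (fun s => (M s).det) t := by
  simp only [det_apply']
  exact DifferentiableAt.fun_sum fun σ _ =>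
    (differentiableAt_const _).mul (DifferentiableAt.fun_finsetProd fun i _ => hM _ _)

theorem differentiableAt_adjugate_apply [Fintype n] [DecidableEq n] {M : ℝ → Matrix n n ℝ} {t : ℝ}
    (hM : ∀ i j, DifferentiableAt ℝ (fun s => M s i j) t) (i j : n) :
    DifferentiableAt ℝ (fun s => (M s).adjugate i j) t := by
  simp only [adjugate_apply]
  refine differentiableAt_det fun k l => ?_
  rcases eq_or_ne k j with rfl | hk
  · simpa only [updateRow_self] using differentiableAt_const _
  · simpa only [updateRow_ne hk] using hM k l

theorem differentiableAt_inv_apply [Fintype n] [DecidableEq n] {M : ℝ → Matrix n n ℝ} {t : ℝ}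
    (hM : ∀ i j, DifferentiableAt ℝ (fun s => M s i j) t) (hdet : (M t).det ≠ 0) (i j : n) :
    DifferentiableAt ℝ (fun s => (M s)⁻¹ i j) t := by
  simp only [inv_def, Matrix.smul_apply, Ring.inverse_eq_inv', smul_eq_mul]
  exact ((differentiableAt_det hM).inv hdet).mul (differentiableAt_adjugate_apply hM i j)

theorem HasMatrixDerivAt.inv [Fintype n] [DecidableEq n] {M : ℝ → Matrix n n ℝ}
    {M' : Matrix n n ℝ} {t : ℝ}
    (hM : HasMatrixDerivAt M M' t) (hdet : IsUnit (M t).det) :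
    HasMatrixDerivAt (fun s => (M s)⁻¹) (-((M t)⁻¹ * M' * (M t)⁻¹)) t := by
  set Q' : Matrix n n ℝ := of fun i j => deriv (fun s => (M s)⁻¹ i j) t
  have hQ : HasMatrixDerivAt (fun s => (M s)⁻¹) Q' t := fun i j =>
    (differentiableAt_inv_apply (fun i j => (hM i j).differentiableAt) hdet.ne_zero i j).hasDerivAt
  have hdet_near : ∀ᶠ s in 𝓝 t, IsUnit (M s).det :=
    ((differentiableAt_det fun i j => (hM i j).differentiableAt).continuousAt.eventually_ne
      hdet.ne_zero).mono fun _ hs => hs.isUnit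
  -- `M * M⁻¹` is locally constant, so its derivative `M' * M⁻¹ + M * Q'` vanishes.
  have hone : HasMatrixDerivAt (fun s => M s * (M s)⁻¹) 0 t :=
    (hasMatrixDerivAt_const 1 t).congr_of_eventuallyEq
      (hdet_near.mono fun _ hs => mul_nonsing_inv _ hs)
  have hzero : M' * (M t)⁻¹ + M t * Q' = 0 := (hM.mul hQ).unique hone
  have hQ'_eq : Q' = -((M t)⁻¹ * M' * (M t)⁻¹) := by
    have h := congrArg ((M t)⁻¹ * ·) hzero
    simp only [Matrix.mul_add, ← Matrix.mul_assoc, nonsing_inv_mul _ hdet, Matrix.one_mul,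
      Matrix.mul_zero] at h
    exact eq_neg_of_add_eq_zero_right h
  rwa [hQ'_eq] at hQ

theorem hasMatrixDerivAt_exp_smul [Fintype m] [DecidableEq m] (A : Matrix m m ℝ)
    {φ : ℝ → ℝ} {φ' t : ℝ} (hφ : HasDerivAt φ φ' t) :
    HasMatrixDerivAt (fun s => exp (φ s • A)) (φ' • (A * exp (φ t • A))) t := by
  let : NormedRing (Matrix m m ℝ) := Matrix.linftyOpNormedRing
  let : NormedAlgebra ℝ (Matrix m m ℝ) := Matrix.linftyOpNormedAlgebra
  intro i j
  exact ((entryLinearMap ℝ ℝ i j).toContinuousLinearMap.hasFDerivAt.comp_hasDerivAt t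
    ((hasDerivAt_exp_smul_const' A (φ t)).scomp t hφ) :)

end MatrixDeriv

namespace Matrix

theorem isUnit_of_rank_eq_card {n K : Type*} [Fintype n] [DecidableEq n] [Field K]
    {M : Matrix n n K} (h : M.rank = Fintype.card n) : IsUnit M := by
  rw [← mulVec_surjective_iff_isUnit]
  have : LinearMap.range M.mulVecLin = ⊤ := Submodule.eq_top_of_finrank_eq <| by
    rwa [Module.finrank_fintype_fun_eq_card]
  exact LinearMap.range_eq_top.mp this

theorem isUnit_transpose_mul_self_of_rank_eq_card {m n R : Type*} [Fintype m] [Fintype n]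
    [DecidableEq n] [Field R] [LinearOrder R] [IsStrictOrderedRing R] {Z : Matrix m n R}
    (h : Z.rank = Fintype.card n) : IsUnit (Zᵀ * Z) :=
  isUnit_of_rank_eq_card (by rw [rank_transpose_mul_self, h])

end Matrix

theorem projector_derivative_eq_riccati {m n R : Type*} [Fintype m] [Fintype n] [CommRing R]
    (B : Matrix m m R) (Z : Matrix m n R) (Q : Matrix n n R) :
    (B * Z * Q + Z * -(Q * ((B * Z)ᵀ * Z + Zᵀ * (B * Z)) * Q)) * Zᵀ + Z * Q * (B * Z)ᵀ =
      B * (Z * Q * Zᵀ) + Z * Q * Zᵀ * Bᵀ - Z * Q * Zᵀ * (B + Bᵀ) * (Z * Q * Zᵀ) := by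
  simp only [transpose_mul, Matrix.mul_add, Matrix.add_mul, Matrix.mul_neg, Matrix.neg_mul,
    Matrix.mul_assoc]
  abel

theorem projector_of_linear_flow_satisfies_riccati
    (n r : ℕ)
    (A : Matrix (Fin n) (Fin n) ℝ)
    (ε : ℝ) (hε : 0 < ε)
    (Z₀ : Matrix (Fin n) (Fin r) ℝ) (hZ₀ : Z₀.rank = r)
    (Z : ℝ → Matrix (Fin n) (Fin r) ℝ)
    (hZ : ∀ t, Z t = exp ((t / ε) • A) * Z₀)
    (P : ℝ → Matrix (Fin n) (Fin n) ℝ)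
    (hP : ∀ t, P t = Z t * ((Z t)ᵀ * Z t)⁻¹ * (Z t)ᵀ) :
    (∀ t : ℝ, IsUnit ((Z t)ᵀ * Z t)) ∧
    ∃ P' : ℝ → Matrix (Fin n) (Fin n) ℝ,
      (∀ t, ∀ i j, HasDerivAt (fun s => P s i j) (P' t i j) t) ∧
      (∀ t, ε • P' t = A * P t + P t * Aᵀ - P t * (A + Aᵀ) * P t) := by
  have hG : ∀ t, IsUnit ((Z t)ᵀ * Z t) := fun t => by
    refine isUnit_transpose_mul_self_of_rank_eq_card ?_
    have hdet : IsUnit (exp ((t / ε) • A)).det := (isUnit_iff_isUnit_det _).mp (isUnit_exp _)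
    rw [hZ, rank_mul_eq_right_of_isUnit_det _ _ hdet, hZ₀, Fintype.card_fin]
  set B := ε⁻¹ • A
  have hZ' : ∀ t, HasMatrixDerivAt Z (B * Z t) t := fun t => by
    have := (hasMatrixDerivAt_exp_smul A ((hasDerivAt_id t).div_const ε)).mul_const Z₀
    simpa only [hZ t, smul_mul, id_eq, ← funext hZ, one_div, Matrix.mul_assoc, B] using this
  refine ⟨hG, fun t => B * P t + P t * Bᵀ - P t * (B + Bᵀ) * P t, fun t => ?_, fun t => ?_⟩
  · have hQ' := ((hZ' t).transpose.mul (hZ' t)).inv ((isUnit_iff_isUnit_det _).mp (hG t))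
    have := ((hZ' t).mul hQ').mul (hZ' t).transpose
    rwa [projector_derivative_eq_riccati, ← hP, ← funext hP] at this
  · simp only [B, transpose_smul, ← smul_add, Matrix.smul_mul, Matrix.mul_smul, ← smul_sub,
      smul_smul, mul_inv_cancel₀ hε.ne', one_smul]
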